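/- In the ring A_1 generated over K̄_c by τ and d with relations dτ - τd = [1]^{1/q}, τλ = λ^q τ, dλ = λ^{1/q} d (λ ∈ K̄_c), every element can be uniquely written as a finite sum Σ λ_{ij} τ^i d^j; moreover A_1 has no zero divisors. -/

import Mathlib

/-!
Realize `A_1` inside the additive endomorphisms of `V = ⨁_{ℕ × ℕ} L`, letting `τ` and `d` act
as they would by left multiplication on the basis `τ^i d^j`. The relations alone make the
additive span of the monomials `λ τ^i d^j` closed under multiplication, so this span is a ring.
Ordering monomials by total degree and then by the exponent of `τ`, a monomial applied to a basis
vector gives the expected leading term plus terms of lower total degree, so `Σ f_{ij} τ^i d^j`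
applied to any nonzero `w` has a nonzero coefficient at the sum of the leading indices of `f`
and `w`. Applied to `w = e_{(0,0)}` this gives uniqueness of the expansion, and applied to a
second such sum, the absence of zero divisors.
-/

open Finsupp

namespace WeylCarlitz

variable {L : Type} [Field L]

section Spanning

variable {R : Type} [Ring R] (ι : L →+* R) (τ δ : R)

noncomputable def monomialSum : ((ℕ × ℕ) →₀ L) →+ R :=
  liftAddHom fun ij => (AddMonoidHom.mulRight (τ ^ ij.1 * δ ^ ij.2)).comp ι.toAddMonoidHom

lemma monomialSum_single (ij : ℕ × ℕ) (l : L) :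
    monomialSum ι τ δ (single ij l) = ι l * τ ^ ij.1 * δ ^ ij.2 := by
  simp [monomialSum, mul_assoc]

lemma monomialSum_apply (f : (ℕ × ℕ) →₀ L) :
    monomialSum ι τ δ f = f.sum fun ij l => ι l * τ ^ ij.1 * δ ^ ij.2 := by
  simp [monomialSum, liftAddHom_apply, mul_assoc, Function.comp_def]

variable {ι τ δ}

local notation "span" => AddMonoidHom.range (monomialSum ι τ δ)

lemma mul_mem_range_of_forall_single {a : R}
    (h : ∀ ij l, a * monomialSum ι τ δ (single ij l) ∈ span) : ∀ s ∈ span, a * s ∈ span := by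
  rintro _ ⟨f, rfl⟩
  induction f using Finsupp.induction_linear with
  | zero => simp
  | add f g hf hg => simpa [mul_add] using add_mem hf hg
  | single ij l => exact h ij l

lemma pow_mul_mem_range {a : R} (ha : ∀ s ∈ span, a * s ∈ span) (n : ℕ) :
    ∀ s ∈ span, a ^ n * s ∈ span := by
  induction n with
  | zero => simp
  | succ n ih => intro s hs; simpa [pow_succ', mul_assoc] using ha _ (ih s hs)

lemma scalar_mul_mem_range (c : L) : ∀ s ∈ span, ι c * s ∈ span :=
  mul_mem_range_of_forall_single fun ij l =>
    ⟨single ij (c * l), by simp only [monomialSum_single, map_mul, mul_assoc]⟩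

variable {φ ψ : L → L} {c : L} (hτ : ∀ l, τ * ι l = ι (φ l) * τ)
  (hδ : ∀ l, δ * ι l = ι (ψ l) * δ) (hδτ : δ * τ - τ * δ = ι c)

include hτ in
lemma tau_mul_mem_range : ∀ s ∈ span, τ * s ∈ span :=
  mul_mem_range_of_forall_single fun ij l =>
    ⟨single (ij.1 + 1, ij.2) (φ l), by
      simp only [monomialSum_single, ← mul_assoc, hτ, pow_succ']⟩

include hτ hδ hδτ in
lemma delta_mul_mem_range : ∀ s ∈ span, δ * s ∈ span := by
  have hbasis : ∀ i j, δ * (τ ^ i * δ ^ j) ∈ span := by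
    intro i j
    induction i with
    | zero => exact ⟨single (0, j + 1) 1, by simp [monomialSum_single, pow_succ']⟩
    | succ i ih =>
      have hcomm : δ * τ = τ * δ + ι c := by rw [← hδτ]; abel
      have hsplit : δ * (τ ^ (i + 1) * δ ^ j) =
          τ * (δ * (τ ^ i * δ ^ j)) + ι c * (τ ^ i * δ ^ j) := by
        rw [pow_succ', ← mul_assoc, ← mul_assoc, hcomm]; noncomm_ring
      rw [hsplit]
      exact add_mem (tau_mul_mem_range hτ _ ih)
        (scalar_mul_mem_range c _ ⟨single (i, j) 1, by simp [monomialSum_single]⟩)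
  refine mul_mem_range_of_forall_single fun ij l => ?_
  rw [monomialSum_single, ← mul_assoc, ← mul_assoc, hδ, mul_assoc, mul_assoc]
  exact scalar_mul_mem_range _ _ (hbasis ij.1 ij.2)

include hτ hδ hδτ in
lemma mul_mem_range {a b : R} (ha : a ∈ span) (hb : b ∈ span) : a * b ∈ span := by
  obtain ⟨f, rfl⟩ := ha
  induction f using Finsupp.induction_linear generalizing b with
  | zero => simp
  | add f g hf hg => simpa [add_mul] using add_mem (hf hb) (hg hb)
  | single ij l =>
    rw [monomialSum_single, mul_assoc, mul_assoc]
    exact scalar_mul_mem_range l _ <| pow_mul_mem_range (tau_mul_mem_range hτ) _ _ <|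
      pow_mul_mem_range (delta_mul_mem_range hτ hδ hδτ) _ _ hb

noncomputable def monomialSubring : Subring R where
  toAddSubgroup := span
  mul_mem' := mul_mem_range hτ hδ hδτ
  one_mem' := ⟨single 0 1, by simp [monomialSum_single]⟩

include hτ hδ hδτ in
theorem exists_ring_of_monomialSum_injective (hinj : Function.Injective (monomialSum ι τ δ))
    (hdom : ∀ f g, f ≠ 0 → g ≠ 0 → monomialSum ι τ δ f * monomialSum ι τ δ g ≠ 0) :
    ∃ (A : Type) (_ : Ring A) (iota : L →+* A) (tau d : A),
      (∀ l : L, tau * iota l = iota (φ l) * tau) ∧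
      (∀ l : L, d * iota l = iota (ψ l) * d) ∧
      d * tau - tau * d = iota c ∧
      (∀ a : A, ∃! f : (ℕ × ℕ) →₀ L,
        a = f.sum fun ij l => iota l * tau ^ ij.1 * d ^ ij.2) ∧
      (∀ a b : A, a * b = 0 → a = 0 ∨ b = 0) := by
  set A := monomialSubring hτ hδ hδτ
  have mem (f) : monomialSum ι τ δ f ∈ A := ⟨f, rfl⟩
  let iota : L →+* A :=
    ι.codRestrict A fun l => by simpa [monomialSum_single] using mem (single 0 l)
  let tau : A := ⟨τ, by simpa [monomialSum_single] using mem (single (1, 0) 1)⟩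
  let d : A := ⟨δ, by simpa [monomialSum_single] using mem (single (0, 1) 1)⟩
  have coe_sum (f) : ((f.sum fun ij l => iota l * tau ^ ij.1 * d ^ ij.2 : A) : R) =
      monomialSum ι τ δ f := by
    change A.subtype _ = _
    rw [map_finsuppSum, monomialSum_apply]
    simp [iota, tau, d]
  refine ⟨A, inferInstance, iota, tau, d, fun l => Subtype.ext (hτ l),
    fun l => Subtype.ext (hδ l), Subtype.ext hδτ, fun a => ?_, fun a b hab => ?_⟩
  · obtain ⟨f, hf⟩ := a.2
    exact ⟨f, Subtype.ext (by rw [coe_sum, hf]), fun g hg => hinj (by rw [← coe_sum, ← hg, hf])⟩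
  · obtain ⟨f, hf⟩ := a.2
    obtain ⟨g, hg⟩ := b.2
    by_contra! hne
    refine hdom f g ?_ ?_ (by rw [hf, hg]; exact congrArg Subtype.val hab)
    · rintro rfl; exact hne.1 (Subtype.ext (by simpa using hf.symm))
    · rintro rfl; exact hne.2 (Subtype.ext (by simpa using hg.symm))

end Spanning

section LeadingTerm

variable {α β M N : Type*} [AddCommMonoid M] [AddCommMonoid N]

lemma apply_apply_eq_sum_single (Φ : (α →₀ M) →+ AddMonoid.End (β →₀ N)) (f : α →₀ M)
    (w : β →₀ N) (n : β) :
    Φ f w n = ∑ p ∈ f.support ×ˢ w.support, Φ (single p.1 (f p.1)) (single p.2 (w p.2)) n := by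
  have hw : ∀ F : AddMonoid.End (β →₀ N), F w = ∑ m ∈ w.support, F (single m (w m)) := by
    intro F
    conv_lhs => rw [← w.sum_single]
    exact map_finsuppSum F w single
  have hf : Φ f w = ∑ ij ∈ f.support, Φ (single ij (f ij)) w := by
    conv_lhs => rw [← f.sum_single]
    rw [map_finsuppSum]
    exact AddMonoidHom.finsetSum_apply _ _ _
  rw [Finset.sum_product, hf, Finsupp.finsetSum_apply]
  refine Finset.sum_congr rfl fun ij _ => ?_
  rw [hw, Finsupp.finsetSum_apply]

def weight (m : ℕ × ℕ) : ℕ ×ₗ ℕ := toLex (m.1 + m.2, m.1)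

lemma fst_add_snd_le_of_weight_le {m m' : ℕ × ℕ} (h : weight m ≤ weight m') :
    m.1 + m.2 ≤ m'.1 + m'.2 := by
  rw [weight, weight, Prod.Lex.le_iff] at h
  simp only [ofLex_toLex] at h
  omega

lemma eq_of_weight_le_of_add_eq {a b a' b' : ℕ × ℕ} (ha : weight a ≤ weight a')
    (hb : weight b ≤ weight b') (h : a.1 + b.1 = a'.1 + b'.1 ∧ a.2 + b.2 = a'.2 + b'.2) :
    a = a' ∧ b = b' := by
  rw [weight, weight, Prod.Lex.le_iff] at ha hb
  simp only [ofLex_toLex] at ha hb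
  constructor <;> ext <;> omega

end LeadingTerm

section Representation

variable (σ : L ≃+* L) (y : L)

noncomputable def scalarEnd : L →+* AddMonoid.End ((ℕ × ℕ) →₀ L) := Module.toAddMonoidEnd L _

/-- `d τ^n = τ^n d + c_n τ^(n-1)` when `d τ - τ d = y` and `τ λ = σ(λ) τ`. -/
noncomputable def carlitzCoeff : ℕ → L
  | 0 => 0
  | n + 1 => σ (carlitzCoeff n) + y

/-- Left multiplication by `τ` on the would-be basis `τ^i d^j`, indexed by `(i, j)`. -/
noncomputable def tauEnd : AddMonoid.End ((ℕ × ℕ) →₀ L) :=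
  liftAddHom fun ij => (singleAddHom (ij.1 + 1, ij.2)).comp σ.toAddMonoidHom

/-- Left multiplication by `d` on the would-be basis `τ^i d^j`. For `i = 0` the second summand
sits at the truncated index `(0 - 1, j) = (0, j)` but vanishes, as `carlitzCoeff σ y 0 = 0`. -/
noncomputable def deltaEnd : AddMonoid.End ((ℕ × ℕ) →₀ L) :=
  liftAddHom fun ij => (singleAddHom (ij.1, ij.2 + 1)).comp σ.symm.toAddMonoidHom +
    (singleAddHom (ij.1 - 1, ij.2)).comp
      ((AddMonoidHom.mulLeft (carlitzCoeff σ y ij.1)).comp σ.symm.toAddMonoidHom)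

variable {σ y}

lemma addMonoidEnd_ext {f g : AddMonoid.End ((ℕ × ℕ) →₀ L)}
    (h : ∀ m b, f (single m b) = g (single m b)) : f = g :=
  addHom_ext h

@[simp] lemma scalarEnd_single (l : L) (m : ℕ × ℕ) (b : L) :
    scalarEnd l (single m b) = single m (l * b) :=
  smul_single l m b

@[simp] lemma tauEnd_single (m : ℕ × ℕ) (b : L) :
    tauEnd σ (single m b) = single (m.1 + 1, m.2) (σ b) :=
  liftAddHom_apply_single _ m b

@[simp] lemma deltaEnd_single (m : ℕ × ℕ) (b : L) :
    deltaEnd σ y (single m b) = single (m.1, m.2 + 1) (σ.symm b) +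
      single (m.1 - 1, m.2) (carlitzCoeff σ y m.1 * σ.symm b) :=
  liftAddHom_apply_single _ m b

lemma tauEnd_mul_scalarEnd (l : L) : tauEnd σ * scalarEnd l = scalarEnd (σ l) * tauEnd σ :=
  addMonoidEnd_ext fun m b => by simp [-single_mul]

lemma deltaEnd_mul_scalarEnd (l : L) :
    deltaEnd σ y * scalarEnd l = scalarEnd (σ.symm l) * deltaEnd σ y :=
  addMonoidEnd_ext fun m b => by simp [-single_mul]; ring_nf

lemma deltaEnd_mul_tauEnd_sub :
    deltaEnd σ y * tauEnd σ - tauEnd σ * deltaEnd σ y = scalarEnd y := by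
  rw [sub_eq_iff_eq_add]
  refine addMonoidEnd_ext fun m b => ?_
  change deltaEnd σ y (tauEnd σ _) = scalarEnd y _ + tauEnd σ (deltaEnd σ y _)
  rcases m with ⟨_ | i, j⟩ <;> simp [carlitzCoeff, add_mul, -single_mul] <;> abel

lemma tauEnd_pow_single (n : ℕ) (m : ℕ × ℕ) (b : L) :
    (tauEnd σ ^ n) (single m b) = single (m.1 + n, m.2) ((σ ^ n) b) := by
  induction n with
  | zero => rfl
  | succ n ih =>
    rw [pow_succ', AddMonoid.End.coe_mul, Function.comp_apply, ih, tauEnd_single, pow_succ',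
      RingAut.mul_apply]
    rfl

def lowDeg (N : ℕ) : Submodule L ((ℕ × ℕ) →₀ L) := supported L L {m | m.1 + m.2 < N}

lemma single_mem_lowDeg {N : ℕ} {m : ℕ × ℕ} (h : m.1 + m.2 < N) (b : L) :
    single m b ∈ lowDeg N :=
  single_mem_supported L b h

lemma apply_mem_lowDeg {F : AddMonoid.End ((ℕ × ℕ) →₀ L)} {N N' : ℕ}
    (hF : ∀ m b, m.1 + m.2 < N → F (single m b) ∈ lowDeg N') {w : (ℕ × ℕ) →₀ L}
    (hw : w ∈ lowDeg N) : F w ∈ lowDeg N' := by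
  rw [← w.sum_single, map_finsuppSum]
  exact Submodule.finsuppSum_mem _ _ _ _ fun m hm =>
    hF m _ ((mem_supported L w).1 hw (mem_support_iff.2 hm))

variable (σ y)

lemma tauEnd_mem_lowDeg {N : ℕ} {w : (ℕ × ℕ) →₀ L} (hw : w ∈ lowDeg N) :
    tauEnd σ w ∈ lowDeg (N + 1) :=
  apply_mem_lowDeg (fun m b hm => by
    rw [tauEnd_single]; exact single_mem_lowDeg (by simp only; omega) _) hw

lemma tauEnd_pow_mem_lowDeg (n : ℕ) {N : ℕ} {w : (ℕ × ℕ) →₀ L} (hw : w ∈ lowDeg N) :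
    (tauEnd σ ^ n) w ∈ lowDeg (N + n) := by
  induction n with
  | zero => exact hw
  | succ n ih =>
    rw [pow_succ', AddMonoid.End.coe_mul, Function.comp_apply, ← add_assoc]
    exact tauEnd_mem_lowDeg σ ih

lemma deltaEnd_mem_lowDeg {N : ℕ} {w : (ℕ × ℕ) →₀ L} (hw : w ∈ lowDeg N) :
    deltaEnd σ y w ∈ lowDeg (N + 1) :=
  apply_mem_lowDeg (fun m b hm => by
    rw [deltaEnd_single]
    exact add_mem (single_mem_lowDeg (by simp only; omega) _)
      (single_mem_lowDeg (by simp only; omega) _)) hw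

lemma deltaEnd_single_sub_mem (m : ℕ × ℕ) (b : L) :
    deltaEnd σ y (single m b) - single (m.1, m.2 + 1) (σ.symm b) ∈ lowDeg (m.1 + m.2 + 1) := by
  rw [deltaEnd_single, add_sub_cancel_left]
  exact single_mem_lowDeg (by simp only; omega) _

lemma deltaEnd_pow_single_sub_mem (n : ℕ) (m : ℕ × ℕ) (b : L) :
    (deltaEnd σ y ^ n) (single m b) - single (m.1, m.2 + n) ((σ.symm ^ n) b) ∈
      lowDeg (m.1 + m.2 + n) := by
  induction n with
  | zero => simp
  | succ n ih =>
    have hstep := deltaEnd_single_sub_mem σ y (m.1, m.2 + n) ((σ.symm ^ n) b)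
    dsimp only at hstep
    rw [← add_assoc] at hstep
    have h := add_mem (deltaEnd_mem_lowDeg σ y ih) hstep
    rw [map_sub, sub_add_sub_cancel, ← Function.comp_apply (f := deltaEnd σ y),
      ← AddMonoid.End.coe_mul, ← pow_succ', ← RingAut.mul_apply, ← pow_succ'] at h
    simpa only [← add_assoc] using h

lemma monomialSum_single_apply_single_sub_mem (ij : ℕ × ℕ) (a : L) (m : ℕ × ℕ) (b : L) :
    monomialSum scalarEnd (tauEnd σ) (deltaEnd σ y) (single ij a) (single m b) -
        single (m.1 + ij.1, m.2 + ij.2) (a * (σ ^ ij.1) ((σ.symm ^ ij.2) b)) ∈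
      lowDeg (m.1 + m.2 + ij.2 + ij.1) := by
  have h := Submodule.smul_mem _ a
    (tauEnd_pow_mem_lowDeg σ ij.1 (deltaEnd_pow_single_sub_mem σ y ij.2 m b))
  rw [map_sub, tauEnd_pow_single, smul_sub, smul_single, smul_eq_mul] at h
  rw [monomialSum_single]
  exact h

lemma monomialSum_single_apply_single_apply {ij m n : ℕ × ℕ} (a b : L)
    (hn : m.1 + m.2 + ij.2 + ij.1 ≤ n.1 + n.2) :
    monomialSum scalarEnd (tauEnd σ) (deltaEnd σ y) (single ij a) (single m b) n =
      single (m.1 + ij.1, m.2 + ij.2) (a * (σ ^ ij.1) ((σ.symm ^ ij.2) b)) n := by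
  have h := monomialSum_single_apply_single_sub_mem σ y ij a m b
  rw [lowDeg, mem_supported'] at h
  rw [← sub_eq_zero, ← Finsupp.sub_apply]
  exact h n (by simp only [Set.mem_ofPred_eq]; omega)

lemma monomialSum_apply_ne_zero {f w : (ℕ × ℕ) →₀ L} (hf : f ≠ 0) (hw : w ≠ 0) :
    monomialSum scalarEnd (tauEnd σ) (deltaEnd σ y) f w ≠ 0 := by
  obtain ⟨mf, hmf, hmaxf⟩ := f.support.exists_max_image weight (support_nonempty_iff.2 hf)
  obtain ⟨mw, hmw, hmaxw⟩ := w.support.exists_max_image weight (support_nonempty_iff.2 hw)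
  set pt : ℕ × ℕ := (mw.1 + mf.1, mw.2 + mf.2) with hpt
  have hterm : ∀ ij ∈ f.support, ∀ m ∈ w.support,
      monomialSum scalarEnd (tauEnd σ) (deltaEnd σ y) (single ij (f ij)) (single m (w m)) pt =
        single (m.1 + ij.1, m.2 + ij.2) (f ij * (σ ^ ij.1) ((σ.symm ^ ij.2) (w m))) pt := by
    intro ij hij m hm
    have := fst_add_snd_le_of_weight_le (hmaxf ij hij)
    have := fst_add_snd_le_of_weight_le (hmaxw m hm)
    exact monomialSum_single_apply_single_apply σ y _ _ (by simp only [hpt]; omega)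
  intro h0
  have hcoeff := DFunLike.congr_fun h0 pt
  rw [apply_apply_eq_sum_single, Finsupp.coe_zero, Pi.zero_apply] at hcoeff
  rw [Finset.sum_eq_single_of_mem (mf, mw) (Finset.mem_product.2 ⟨hmf, hmw⟩), hterm mf hmf mw hmw,
    single_eq_same] at hcoeff
  · exact mul_ne_zero (mem_support_iff.1 hmf)
      ((map_ne_zero _).2 ((map_ne_zero _).2 (mem_support_iff.1 hmw))) hcoeff
  · rintro ⟨ij, m⟩ hp hne
    rw [Finset.mem_product] at hp
    rw [hterm ij hp.1 m hp.2]
    refine single_eq_of_ne fun heq => hne ?_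
    obtain ⟨rfl, rfl⟩ := eq_of_weight_le_of_add_eq (hmaxf ij hp.1) (hmaxw m hp.2)
      (by simp only [hpt, Prod.ext_iff] at heq; omega)
    rfl

lemma monomialSum_injective :
    Function.Injective (monomialSum scalarEnd (tauEnd σ) (deltaEnd σ y)) := by
  refine (injective_iff_map_eq_zero _).2 fun f hf => ?_
  by_contra hne
  exact monomialSum_apply_ne_zero σ y hne (single_ne_zero.2 one_ne_zero)
    (DFunLike.congr_fun hf (single 0 1))

lemma monomialSum_mul_ne_zero {f g : (ℕ × ℕ) →₀ L} (hf : f ≠ 0) (hg : g ≠ 0) :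
    monomialSum scalarEnd (tauEnd σ) (deltaEnd σ y) f *
      monomialSum scalarEnd (tauEnd σ) (deltaEnd σ y) g ≠ 0 := fun h =>
  monomialSum_apply_ne_zero σ y hf
    (monomialSum_apply_ne_zero σ y hg (single_ne_zero.2 (one_ne_zero (α := L))))
    (DFunLike.congr_fun h (single 0 1))

end Representation

end WeylCarlitz

theorem weyl_carlitz_ring_exists
    (L : Type) [Field L] (q : ℕ)
    (frob : L ≃+* L) (hfrob : ∀ l : L, frob l = l ^ q)
    (x : L) :
    ∃ (A : Type) (_ : Ring A) (iota : L →+* A) (tau d : A),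
      (∀ l : L, tau * iota l = iota (l ^ q) * tau) ∧
      (∀ l : L, d * iota l = iota (frob.symm l) * d) ∧
      d * tau - tau * d = iota (frob.symm (x ^ q - x)) ∧
      (∀ a : A, ∃! f : (ℕ × ℕ) →₀ L,
        a = f.sum fun ij l => iota l * tau ^ ij.1 * d ^ ij.2) ∧
      (∀ a b : A, a * b = 0 → a = 0 ∨ b = 0) := by
  open WeylCarlitz in
  refine exists_ring_of_monomialSum_injective (fun l => ?_) deltaEnd_mul_scalarEnd
    deltaEnd_mul_tauEnd_sub (monomialSum_injective frob _)
    fun f g => monomialSum_mul_ne_zero frob _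
  rw [← hfrob]
  exact tauEnd_mul_scalarEnd l
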